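/- Let G be the graph obtained by taking three disjoint copies of the diamond K₄ − e, and a new vertex u joined by an edge to a degree-2 vertex of each copy. Then G is subcubic, lies in G¹ (all odd cycles are triangles), and L(G) has no kernel-perfect orientation with all out-degrees at most 2; in particular G is not 3-edge-orientable. -/

import Mathlib

open SimpleGraph

/-- Adjacency in the line graph `L(G)`: two distinct edges sharing an endpoint. -/
def lineAdj {V : Type*} (G : SimpleGraph V) (e f : G.edgeSet) : Prop :=
  e ≠ f ∧ ∃ x : V, x ∈ (e : Sym2 V) ∧ x ∈ (f : Sym2 V)

/-- `D` is an orientation of the (loopless) adjacency relation `Adj`: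
every arc of `D` is an edge, and every edge gets at least one of its two arcs. -/
def IsOrientation {α : Type*} (Adj : α → α → Prop) (D : α → α → Prop) : Prop :=
  (∀ a b, D a b → Adj a b) ∧ (∀ a b, Adj a b → D a b ∨ D b a)

/-- A digraph (relation) is kernel-perfect if every induced subdigraph has a kernel:
an independent set `S` such that every vertex outside `S` has an out-neighbor in `S`. -/
def KernelPerfect {α : Type*} (D : α → α → Prop) : Prop :=
  ∀ Z : Set α, ∃ S ⊆ Z, (∀ a ∈ S, ∀ b ∈ S, ¬ D a b) ∧
    ∀ z ∈ Z, z ∉ S → ∃ s ∈ S, D z s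

/-- Out-degree of a vertex in a digraph given as a relation. -/
noncomputable def outDeg {α : Type*} (D : α → α → Prop) (a : α) : ℕ := {b | D a b}.ncard

/-- Degree of a vertex. -/
noncomputable def deg {V : Type*} (G : SimpleGraph V) (v : V) : ℕ := (G.neighborSet v).ncard

/-- Maximum degree. -/
noncomputable def maxDeg {V : Type*} (G : SimpleGraph V) : ℕ := sSup (Set.range (deg G))

/-- `G` is `f`-edge-orientable: `L(G)` admits a kernel-perfect orientation with
`1 + d⁺(e) ≤ f e` for every edge `e`. -/
def EdgeOrientable {V : Type*} (G : SimpleGraph V) (f : G.edgeSet → ℕ) : Prop :=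
  ∃ D : G.edgeSet → G.edgeSet → Prop,
    IsOrientation (lineAdj G) D ∧ KernelPerfect D ∧ ∀ e, outDeg D e + 1 ≤ f e

open Classical in
/-- The function `f_{k,v}`: `deg v` on edges incident to `v`, and `k` elsewhere. -/
noncomputable def fkv {V : Type*} (G : SimpleGraph V) (k : ℕ) (v : V) (e : G.edgeSet) : ℕ :=
  if v ∈ (e : Sym2 V) then deg G v else k

/-- `G` is strongly `k`-edge-orientable. -/
def StronglyEdgeOrientable {V : Type*} (G : SimpleGraph V) (k : ℕ) : Prop :=
  ∀ v : V, EdgeOrientable G (fkv G k v)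

/-- `G` is `f`-edge-choosable. -/
def FEdgeChoosable {V : Type*} (G : SimpleGraph V) (f : G.edgeSet → ℕ) : Prop :=
  ∀ ℓ : G.edgeSet → Finset ℕ, (∀ e, f e ≤ (ℓ e).card) →
    ∃ φ : G.edgeSet → ℕ, (∀ e, φ e ∈ ℓ e) ∧
      ∀ e₁ e₂, lineAdj G e₁ e₂ → φ e₁ ≠ φ e₂

/-- `G ∈ G*`: any two distinct odd cycles share at most one edge. -/
def InGStar {V : Type*} (G : SimpleGraph V) : Prop :=
  ∀ (u w : V) (c₁ : G.Walk u u) (c₂ : G.Walk w w),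
    c₁.IsCycle → c₂.IsCycle → Odd c₁.length → Odd c₂.length →
    {e | e ∈ c₁.edges} ≠ {e | e ∈ c₂.edges} →
    ({e | e ∈ c₁.edges} ∩ {e | e ∈ c₂.edges}).ncard ≤ 1

/-- `G` is 2-connected: connected, and still connected after deleting any one vertex. -/
def TwoConn {V : Type*} (G : SimpleGraph V) : Prop :=
  G.Connected ∧ ∀ v : V, (G.induce {w | w ≠ v}).Connected

/-- A block of `G`: a maximal 2-connected subgraph. -/
def IsBlock {V : Type*} (G : SimpleGraph V) (B : G.Subgraph) : Prop :=
  TwoConn B.coe ∧ ∀ B' : G.Subgraph, TwoConn B'.coe → B ≤ B' → B = B'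

/-- Vertex type of the theta graph with path lengths `l`: two hubs
(`Sum.inl false`, `Sum.inl true`) plus the internal vertices of each path. -/
def ThetaVert (l : List ℕ) : Type := Bool ⊕ (Σ i : Fin l.length, Fin (l.get i - 1))

/-- The theta graph `Θ_{l₁,…,l_k}`: two hubs joined by internally disjoint paths,
the `i`-th of length `l i`. -/
def thetaGraph (l : List ℕ) : SimpleGraph (ThetaVert l) :=
  SimpleGraph.fromRel (fun a b =>
    match a, b with
    | Sum.inl false, Sum.inl true => 1 ∈ l
    | Sum.inl false, Sum.inr ⟨_, j⟩ => j.val = 0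
    | Sum.inl true, Sum.inr ⟨i, j⟩ => j.val = l.get i - 2
    | Sum.inr ⟨i, j⟩, Sum.inr ⟨i', j'⟩ => i.val = i'.val ∧ j'.val = j.val + 1
    | _, _ => False)

/-- `v` (outside `c`) touches `w ∈ c`: some `v,w`-path meets `c` only at `w`. -/
def Touches {V : Type*} (G : SimpleGraph V) {u : V} (c : G.Walk u u) (v w : V) : Prop :=
  w ∈ c.support ∧ ∃ p : G.Walk v w, p.IsPath ∧ ∀ x ∈ p.support, x ∈ c.support → x = w

/-- The diamond graph `K₄ − e` on vertices `0, 1, 2, 3` with edges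
`01, 02, 12, 13, 23`; the vertices `0` and `3` have degree 2. -/
def diamondRel (a b : Fin 4) : Prop :=
  (a, b) ∈ [((0 : Fin 4), (1 : Fin 4)), (0, 2), (1, 2), (1, 3), (2, 3)]

/-- Three disjoint diamonds plus a hub vertex joined to the degree-2 vertex `0`
of each copy. -/
def tripleDiamond : SimpleGraph (Fin 3 × Fin 4 ⊕ Unit) :=
  SimpleGraph.fromRel (fun a b =>
    match a, b with
    | Sum.inl (i, x), Sum.inl (j, y) => i = j ∧ diamondRel x y
    | Sum.inl (_, x), Sum.inr _ => x = 0
    | _, _ => False)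


/-!
Every edge at the hub is a bridge, so a cycle never passes through the hub and stays inside one
diamond; it therefore has length at most 4, and an odd cycle is a triangle.

In a kernel-perfect orientation the kernel of a clique is a single vertex receiving an arc from
every other vertex of the clique, so every triangle of `L(G)` has a sink. Suppose all out-degrees
are at most 2. Inside one diamond, if both diamond edges at the attachment vertex pointed at the
spoke, each of them would have one out-arc left; whichever vertex is the sink of the triangle they
form with the middle edge, the arcs forced by the out-degree bound end in a vertex with three
out-arcs. So every spoke points into its diamond. The three spokes form a triangle of `L(G)`: its
sink receives arcs from the other two spokes, and whichever way the arc between those two goes, its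
tail has three out-arcs.
-/

section KernelPerfectOrientation

variable {α : Type*} {H : SimpleGraph α} {D : α → α → Prop}

lemma three_le_outDeg [Finite α] {x y z w : α} (hy : D x y) (hz : D x z) (hw : D x w)
    (hyz : y ≠ z) (hyw : y ≠ w) (hzw : z ≠ w) : 3 ≤ outDeg D x := by
  rw [outDeg, ← Set.ncard_eq_three.mpr ⟨y, z, w, hyz, hyw, hzw, rfl⟩]
  exact Set.ncard_le_ncard (by rintro _ (rfl | rfl | rfl) <;> assumption) (Set.toFinite _)

lemma IsOrientation.exists_sink_of_isClique (hor : IsOrientation H.Adj D) (hKP : KernelPerfect D)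
    {T : Set α} (hT : T.Nonempty) (hclique : H.IsClique T) :
    ∃ s ∈ T, ∀ v ∈ T, v ≠ s → D v s := by
  obtain ⟨S, hST, hind, habs⟩ := hKP T
  have hsub : ∀ u ∈ S, ∀ v ∈ S, u = v := fun u hu v hv => by
    by_contra huv
    exact (hor.2 u v (hclique (hST hu) (hST hv) huv)).elim (hind u hu v hv) (hind v hv u hu)
  obtain ⟨s, hs⟩ : S.Nonempty := by
    obtain ⟨t, ht⟩ := hT
    by_cases htS : t ∈ S
    · exact ⟨t, htS⟩
    · obtain ⟨s, hs, -⟩ := habs t ht htS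
      exact ⟨s, hs⟩
  refine ⟨s, hST hs, fun v hv hvs => ?_⟩
  obtain ⟨s', hs', hvs'⟩ := habs v hv fun hvS => hvs (hsub v hvS s hs)
  rwa [hsub s' hs' s hs] at hvs'

lemma IsOrientation.exists_sink_of_triangle (hor : IsOrientation H.Adj D) (hKP : KernelPerfect D)
    {a b c : α} (hab : H.Adj a b) (hac : H.Adj a c) (hbc : H.Adj b c) :
    (D b a ∧ D c a) ∨ (D a b ∧ D c b) ∨ (D a c ∧ D b c) := by
  have hclique : H.IsClique {a, b, c} := by simp [SimpleGraph.isClique_insert, hab, hac, hbc]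
  obtain ⟨s, hs, hsink⟩ := hor.exists_sink_of_isClique hKP (Set.insert_nonempty _ _) hclique
  rcases hs with rfl | rfl | rfl
  · exact .inl ⟨hsink _ (by simp) hab.ne.symm, hsink _ (by simp) hac.ne.symm⟩
  · exact .inr <| .inl ⟨hsink _ (by simp) hab.ne, hsink _ (by simp) hbc.ne.symm⟩
  · exact .inr <| .inr ⟨hsink _ (by simp) hac.ne, hsink _ (by simp) hbc.ne⟩

variable [Finite α]

lemma IsOrientation.arc_to_of_outDeg_le_two (hor : IsOrientation H.Adj D) {x y z w : α}
    (hx : outDeg D x ≤ 2) (hy : D x y) (hz : D x z) (hxw : H.Adj x w)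
    (hyz : y ≠ z) (hyw : y ≠ w) (hzw : z ≠ w) : D w x :=
  (hor.2 x w hxw).resolve_left fun hw => by
    have := three_le_outDeg hy hz hw hyz hyw hzw
    omega

lemma IsOrientation.not_forall_exists_out_of_isClique (hor : IsOrientation H.Adj D)
    (hKP : KernelPerfect D) (hout : ∀ x, outDeg D x ≤ 2) {T : Set α} (hT : H.IsClique T)
    (hcard : 2 < T.ncard) : ¬ ∀ x ∈ T, ∃ y ∉ T, D x y := by
  intro hext
  obtain ⟨s, hs, hsink⟩ :=
    hor.exists_sink_of_isClique hKP (Set.nonempty_of_ncard_ne_zero (by omega)) hT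
  have : 1 < (T \ {s}).ncard := by rw [Set.ncard_sdiff_singleton_of_mem hs]; omega
  obtain ⟨u, ⟨hu, hus⟩, v, ⟨hv, hvs⟩, huv⟩ := (Set.one_lt_ncard).mp this
  have no_arc : ∀ x ∈ T, ∀ y ∈ T, x ≠ s → y ≠ s → x ≠ y → ¬ D x y := by
    intro x hx y hy hxs hys hxy hD
    obtain ⟨z, hz, hxz⟩ := hext x hx
    have := three_le_outDeg (hsink x hx hxs) hD hxz (Ne.symm hys) (ne_of_mem_of_not_mem hs hz)
      (ne_of_mem_of_not_mem hy hz)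
    have := hout x
    omega
  exact (hor.2 u v (hT hu hv huv)).elim (no_arc u hu v hv hus hvs huv)
    (no_arc v hv u hu hvs hus (Ne.symm huv))

-- `a, b, c, d, e` are the edges `01, 02, 12, 13, 23` of a diamond and `f` a further edge at `0`.
lemma IsOrientation.pendant_arc_into_diamond (hor : IsOrientation H.Adj D) (hKP : KernelPerfect D)
    (hout : ∀ x, outDeg D x ≤ 2) {a b c d e f : α} (hnd : [a, b, c, d, e, f].Nodup)
    (hab : H.Adj a b) (hac : H.Adj a c) (had : H.Adj a d) (hbc : H.Adj b c) (hbe : H.Adj b e)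
    (hcd : H.Adj c d) (hce : H.Adj c e) (hde : H.Adj d e) (haf : H.Adj a f) (hbf : H.Adj b f) :
    D f a ∨ D f b := by
  simp only [List.nodup_cons, List.mem_cons, List.not_mem_nil, List.nodup_nil, not_or,
    or_false, not_false_eq_true, and_true] at hnd
  obtain ⟨⟨nab, nac, nad, nae, naf⟩, ⟨nbc, nbd, nbe, nbf⟩, ⟨ncd, nce, ncf⟩, ⟨nde, ndf⟩, nef⟩ := hnd
  have three {x y z w : α} (hy : D x y) (hz : D x z) (hw : D x w) (hyz : y ≠ z) (hyw : y ≠ w)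
      (hzw : z ≠ w) : False := by
    have := three_le_outDeg hy hz hw hyz hyw hzw
    have := hout x
    omega
  have arc {x y z w : α} := hor.arc_to_of_outDeg_le_two (x := x) (y := y) (z := z) (w := w) (hout x)
  by_contra! hin
  have haf' : D a f := (hor.2 a f haf).resolve_right hin.1
  have hbf' : D b f := (hor.2 b f hbf).resolve_right hin.2
  rcases hor.exists_sink_of_triangle hKP hab hac hbc with ⟨hba, hca⟩ | ⟨hab', hcb⟩ | ⟨hac', hbc'⟩
  · have hcb : D c b := arc hbf' hba hbc (Ne.symm naf) (Ne.symm ncf) nac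
    have heb : D e b := arc hbf' hba hbe (Ne.symm naf) (Ne.symm nef) nae
    have hdc : D d c := arc hca hcb hcd nab nad nbd
    have hec : D e c := arc hca hcb hce nab nae nbe
    have hde' : D d e := arc heb hec hde.symm nbc nbd ncd
    have had' : D a d := arc hdc hde' had.symm nce (Ne.symm nac) (Ne.symm nae)
    rcases hor.exists_sink_of_triangle hKP hac had hcd with ⟨-, hda⟩ | ⟨hac', -⟩ | ⟨-, hcd'⟩
    · exact three hdc hde' hda nce (Ne.symm nac) (Ne.symm nae)
    · exact three haf' had' hac' (Ne.symm ndf) (Ne.symm ncf) (Ne.symm ncd)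
    · exact three hca hcb hcd' nab nad nbd
  · have hca : D c a := arc haf' hab' hac (Ne.symm nbf) (Ne.symm ncf) nbc
    have hda : D d a := arc haf' hab' had (Ne.symm nbf) (Ne.symm ndf) nbd
    have hdc : D d c := arc hca hcb hcd nab nad nbd
    have hec : D e c := arc hca hcb hce nab nae nbe
    have hed : D e d := arc hda hdc hde nac nae nce
    have hbe' : D b e := arc hec hed hbe.symm ncd (Ne.symm nbc) (Ne.symm nbd)
    rcases hor.exists_sink_of_triangle hKP hbc hbe hce with ⟨-, heb⟩ | ⟨hbc', -⟩ | ⟨-, hce'⟩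
    · exact three hec hed heb ncd (Ne.symm nbc) (Ne.symm nbd)
    · exact three hbf' hbe' hbc' (Ne.symm nef) (Ne.symm ncf) (Ne.symm nce)
    · exact three hca hcb hce' nab nae nbe
  · have hba : D b a := arc haf' hac' hab (Ne.symm ncf) (Ne.symm nbf) (Ne.symm nbc)
    exact three hbf' hba hbc' (Ne.symm naf) (Ne.symm ncf) nac

end KernelPerfectOrientation

lemma lineAdj_eq_lineGraph_adj {V : Type*} (G : SimpleGraph V) : lineAdj G = G.lineGraph.Adj := by
  ext e f
  exact lineGraph_adj_iff_exists.symm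

lemma SimpleGraph.Walk.support_subset_of_forall_adj {V : Type*} {G : SimpleGraph V} {S : Set V}
    {w : V} (hS : ∀ x ∈ S, ∀ y ∉ S, G.Adj x y → y = w) {u v : V} (p : G.Walk u v) (hu : u ∈ S)
    (hw : w ∉ p.support) : ∀ x ∈ p.support, x ∈ S := by
  induction p with
  | nil => simpa
  | @cons u u' v h p ih =>
    have hu' : u' ∈ S := by
      by_contra hu'
      exact hw (by simp [← hS u hu u' hu' h])
    simp only [Walk.support_cons, List.mem_cons, forall_eq_or_imp]
    exact ⟨hu, ih hu' fun hwp => hw (by simp [hwp])⟩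

instance : DecidableRel diamondRel := fun a b => by
  unfold diamondRel
  infer_instance

instance : DecidableRel tripleDiamond.Adj := fun a b => by
  rw [tripleDiamond, fromRel_adj]
  rcases a with ⟨i, x⟩ | u <;> rcases b with ⟨j, y⟩ | u' <;> dsimp only <;> infer_instance

namespace tripleDiamond

@[simp] lemma adj_inl_inl {i j : Fin 3} {x y : Fin 4} :
    tripleDiamond.Adj (.inl (i, x)) (.inl (j, y)) ↔ i = j ∧ (diamondRel x y ∨ diamondRel y x) := by
  simp only [tripleDiamond, fromRel_adj]
  revert i j x y
  decide

@[simp] lemma adj_inl_inr {i : Fin 3} {x : Fin 4} {u : Unit} :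
    tripleDiamond.Adj (.inl (i, x)) (.inr u) ↔ x = 0 := by
  simp [tripleDiamond]

@[simp] lemma adj_inr_inl {i : Fin 3} {x : Fin 4} {u : Unit} :
    tripleDiamond.Adj (.inr u) (.inl (i, x)) ↔ x = 0 := by
  simp [tripleDiamond]

lemma deg_le_three (v : Fin 3 × Fin 4 ⊕ Unit) : deg tripleDiamond v ≤ 3 := by
  rw [deg, Set.ncard_eq_toFinset_card']
  revert v
  decide

def diamondCopy (i : Fin 3) : Finset (Fin 3 × Fin 4 ⊕ Unit) :=
  Finset.univ.image fun x => .inl (i, x)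

lemma eq_spoke_of_adj_of_mem_diamondCopy {i : Fin 3} {v w : Fin 3 × Fin 4 ⊕ Unit}
    (hv : v ∈ diamondCopy i) (hw : w ∉ diamondCopy i) (h : tripleDiamond.Adj v w) :
    v = .inl (i, 0) ∧ w = .inr () := by
  simp only [diamondCopy, Finset.mem_image, Finset.mem_univ, true_and, not_exists] at hv hw
  obtain ⟨x, rfl⟩ := hv
  rcases w with ⟨j, y⟩ | ⟨⟩
  · obtain ⟨rfl, -⟩ := adj_inl_inl.mp h
    exact absurd rfl (hw y)
  · simp_all

lemma isBridge_spoke (i : Fin 3) : tripleDiamond.IsBridge s(.inl (i, 0), .inr ()) := by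
  rw [isBridge_iff_forall_walk_mem_edges]
  intro p
  obtain ⟨d, hd, hfst, hsnd⟩ :=
    p.exists_boundary_dart (diamondCopy i) (by simp [diamondCopy]) (by simp [diamondCopy])
  obtain ⟨h1, h2⟩ := eq_spoke_of_adj_of_mem_diamondCopy hfst hsnd d.adj
  have hedge : d.edge = s(.inl (i, 0), .inr ()) := by rw [Dart.edge, ← h1, ← h2]
  exact hedge ▸ List.mem_map_of_mem hd

lemma inr_notMem_support_of_isCycle {u : Fin 3 × Fin 4 ⊕ Unit} {c : tripleDiamond.Walk u u}
    (hc : c.IsCycle) : .inr () ∉ c.support := by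
  intro h
  set c' := c.rotate _ h
  have hc' : c'.IsCycle := hc.rotate h
  obtain ⟨i, hi⟩ : ∃ i, c'.snd = .inl (i, 0) := by
    have := c'.adj_snd hc'.not_nil
    rcases hsnd : c'.snd with ⟨i, x⟩ | ⟨⟩
    · rw [hsnd] at this
      exact ⟨i, by simpa using this⟩
    · simp [hsnd] at this
  refine (isBridge_spoke i).notMem_edges_of_isCycle hc' ?_
  rw [Sym2.eq_swap, ← hi]
  exact c'.mk_start_snd_mem_edges hc'.not_nil

lemma length_le_four_of_isCycle {u : Fin 3 × Fin 4 ⊕ Unit} {c : tripleDiamond.Walk u u}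
    (hc : c.IsCycle) : c.length ≤ 4 := by
  have hhub := inr_notMem_support_of_isCycle hc
  obtain ⟨i, x, rfl⟩ : ∃ i x, u = .inl (i, x) := by
    rcases u with ⟨i, x⟩ | ⟨⟩
    · exact ⟨i, x, rfl⟩
    · exact absurd c.start_mem_support hhub
  have hsub := c.support_subset_of_forall_adj (S := diamondCopy i)
    (fun v hv w hw h => (eq_spoke_of_adj_of_mem_diamondCopy hv hw h).2) (by simp [diamondCopy])
    hhub
  calc c.length = c.support.tail.length := by simp
    _ = c.support.tail.toFinset.card := (List.toFinset_card_of_nodup hc.support_nodup).symm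
    _ ≤ (diamondCopy i).card :=
      Finset.card_le_card fun v hv => hsub v (List.mem_of_mem_tail (List.mem_toFinset.mp hv))
    _ ≤ 4 := Finset.card_image_le

lemma length_eq_three_of_isCycle_of_odd {u : Fin 3 × Fin 4 ⊕ Unit} {c : tripleDiamond.Walk u u}
    (hc : c.IsCycle) (hodd : Odd c.length) : c.length = 3 := by
  have := hc.three_le_length
  have := length_le_four_of_isCycle hc
  obtain ⟨k, hk⟩ := hodd
  omega

def spoke (i : Fin 3) : tripleDiamond.edgeSet := ⟨s(.inl (i, 0), .inr ()), by simp⟩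

def diamondEdge (i : Fin 3) (x y : Fin 4) (h : diamondRel x y := by decide) :
    tripleDiamond.edgeSet :=
  ⟨s(.inl (i, x), .inl (i, y)), by simp [h]⟩

lemma not_exists_kernelPerfect_orientation :
    ¬ ∃ D : tripleDiamond.edgeSet → tripleDiamond.edgeSet → Prop,
      IsOrientation (lineAdj tripleDiamond) D ∧ KernelPerfect D ∧ ∀ e, outDeg D e + 1 ≤ 3 := by
  rintro ⟨D, hor, hKP, hout⟩
  rw [lineAdj_eq_lineGraph_adj] at hor
  replace hout : ∀ e, outDeg D e ≤ 2 := fun e => by have := hout e; omega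
  have hspoke i : D (spoke i) (diamondEdge i 0 1) ∨ D (spoke i) (diamondEdge i 0 2) := by
    refine hor.pendant_arc_into_diamond hKP hout (c := diamondEdge i 1 2) (d := diamondEdge i 1 3)
      (e := diamondEdge i 2 3) ?_ ?_ ?_ ?_ ?_ ?_ ?_ ?_ ?_ ?_ ?_ <;>
      simp [lineGraph_adj_iff_exists, diamondEdge, spoke, Subtype.ext_iff]
  have hinj : Function.Injective spoke := fun i j h => by simpa [spoke] using h
  refine hor.not_forall_exists_out_of_isClique hKP hout (T := Set.range spoke) ?_ ?_ ?_
  · rintro _ ⟨i, rfl⟩ _ ⟨j, rfl⟩ hij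
    simp [lineGraph_adj_iff_exists, spoke, hinj.ne_iff.mp hij]
  · simp [Set.ncard_range_of_injective hinj]
  · rintro _ ⟨i, rfl⟩
    rcases hspoke i with h | h <;> exact ⟨_, by simp [diamondEdge, spoke, Subtype.ext_iff], h⟩

end tripleDiamond

/-- the triple-diamond graph is subcubic, lies in `G¹`
(all odd cycles are triangles), and `L(G)` has no kernel-perfect orientation
with all out-degrees at most 2, i.e. `G` is not 3-edge-orientable. -/
theorem stmt16 :
    (∀ v, deg tripleDiamond v ≤ 3) ∧
    (∀ (u : Fin 3 × Fin 4 ⊕ Unit) (c : tripleDiamond.Walk u u),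
      c.IsCycle → Odd c.length → c.length = 3) ∧
    ¬ ∃ D : tripleDiamond.edgeSet → tripleDiamond.edgeSet → Prop,
      IsOrientation (lineAdj tripleDiamond) D ∧ KernelPerfect D ∧
      ∀ e, outDeg D e + 1 ≤ 3 :=
  ⟨tripleDiamond.deg_le_three, fun _ _ => tripleDiamond.length_eq_three_of_isCycle_of_odd,
    tripleDiamond.not_exists_kernelPerfect_orientation⟩
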